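/- For all natural numbers c, t, u, v, w: the sum over i from 0 to c of C(t+i, u)·C(v+i, w) equals the triple sum over integers a, b, j of C(t, u−a)·C(v, w−b)·C(c+j+1, a+b+1)·C(a,j)·C(b,j). -/

import Mathlib

/-!
Expanding `C(t+i,u)` and `C(v+i,w)` by Vandermonde reduces the theorem to
`∑_{i ≤ c} C(i,a) C(i,b) = ∑_j C(c+j+1, a+b+1) C(a,j) C(b,j)`.
This follows by the hockey-stick identity from the pointwise identity
`C(n,a) C(n,b) = ∑_j C(n+j, a+b) C(a,j) C(b,j)`, which in turn comes from expanding
`C(n+j, a+b)` by Vandermonde and evaluating `∑_j C(a,j) C(b,j) C(j,k) = C(b,k) C(a+b-k, a-k)`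
(a multinomial coefficient) by trinomial revision and Vandermonde once more.
-/

open Finset

namespace Nat

theorem add_choose_eq_sum_range (m n k : ℕ) :
    (m + n).choose k = ∑ i ∈ range (k + 1), m.choose (k - i) * n.choose i := by
  rw [add_comm m, add_choose_eq, Finset.Nat.sum_antidiagonal_eq_sum_range_succ_mk]
  exact sum_congr rfl fun i _ => mul_comm _ _

theorem sum_range_choose_mul_choose_mul_choose {a k : ℕ} (hk : k ≤ a) (b : ℕ) :
    ∑ j ∈ range (a + 1), a.choose j * b.choose j * j.choose k
      = b.choose k * (a + b - k).choose (a - k) := by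
  rw [show a + 1 = k + (a - k + 1) by omega, sum_range_add,
    sum_eq_zero fun j hj => by rw [choose_eq_zero_of_lt (mem_range.mp hj), mul_zero], zero_add]
  have revision : ∀ i ∈ range (a - k + 1), a.choose (k + i) * b.choose (k + i) * (k + i).choose k
      = b.choose k * (a.choose (a - k - i) * (b - k).choose i) := by
    intro i hi
    have hi : k + i ≤ a := by have := mem_range.mp hi; omega
    rw [mul_assoc, choose_mul (le_add_right k i), Nat.add_sub_cancel_left,
      ← choose_symm hi, show a - (k + i) = a - k - i by omega]
    ring
  rw [sum_congr rfl revision, ← mul_sum, ← add_choose_eq_sum_range]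
  rcases le_or_gt k b with hkb | hkb
  · rw [show a + (b - k) = a + b - k by omega]
  · rw [choose_eq_zero_of_lt hkb, zero_mul, zero_mul]

theorem choose_mul_choose_eq_sum_add_choose (n a b : ℕ) :
    n.choose a * n.choose b
      = ∑ j ∈ range (a + 1), (n + j).choose (a + b) * a.choose j * b.choose j := by
  have expand : ∀ j, (n + j).choose (a + b) * a.choose j * b.choose j = ∑ k ∈ range (a + b + 1),
      n.choose (a + b - k) * (a.choose j * b.choose j * j.choose k) := fun j => by
    rw [add_choose_eq_sum_range, sum_mul, sum_mul]
    exact sum_congr rfl fun k _ => by ring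
  have vanish : ∀ k ≥ a + 1,
      n.choose (a + b - k) * ∑ j ∈ range (a + 1), a.choose j * b.choose j * j.choose k = 0 :=
    fun k hk => by
      rw [sum_eq_zero fun j hj => by
        rw [choose_eq_zero_of_lt (n := j) (by have := mem_range.mp hj; omega), mul_zero], mul_zero]
  have revision : ∀ k ∈ range (a + 1),
      n.choose (a + b - k) * (b.choose k * (a + b - k).choose (a - k))
        = n.choose b * ((n - b).choose (a - k) * b.choose k) := fun k hk => by
    rw [show a + b - k = b + (a - k) by have := mem_range_succ_iff.mp hk; omega, ← choose_symm_add,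
      mul_left_comm, choose_mul (le_add_right _ _), Nat.add_sub_cancel_left]
    ring
  simp_rw [expand]
  rw [sum_comm]
  simp_rw [← mul_sum]
  rw [eventually_constant_sum vanish (by omega),
    sum_congr rfl fun k hk => by
      rw [sum_range_choose_mul_choose_mul_choose (mem_range_succ_iff.mp hk)],
    sum_congr rfl revision, ← mul_sum, ← add_choose_eq_sum_range]
  rcases le_or_gt b n with hb | hb
  · rw [Nat.sub_add_cancel hb, mul_comm]
  · rw [choose_eq_zero_of_lt hb, mul_zero, zero_mul]

theorem sum_range_add_choose_of_le {j m : ℕ} (h : j ≤ m) (c : ℕ) :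
    ∑ i ∈ range (c + 1), (i + j).choose m = (c + j + 1).choose (m + 1) := by
  induction c with
  | zero =>
    rw [sum_range_one, zero_add, choose_succ_succ', choose_eq_zero_of_lt (by omega : j < m + 1),
      add_zero]
  | succ c ih =>
    rw [sum_range_succ, ih, show c + 1 + j + 1 = c + j + 1 + 1 by omega,
      choose_succ_succ' (c + j + 1) m, show c + 1 + j = c + j + 1 by omega, add_comm]

theorem sum_range_choose_mul_choose (c a b : ℕ) :
    ∑ i ∈ range (c + 1), i.choose a * i.choose b
      = ∑ j ∈ range (min a b + 1), (c + j + 1).choose (a + b + 1) * a.choose j * b.choose j := by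
  have vanish : ∀ j ≥ min a b + 1, (c + j + 1).choose (a + b + 1) * a.choose j * b.choose j = 0 :=
    fun j hj => by
      rcases le_or_gt j a with hja | hja
      · rw [choose_eq_zero_of_lt (n := b) (by omega), mul_zero]
      · rw [choose_eq_zero_of_lt hja, mul_zero, zero_mul]
  rw [← eventually_constant_sum vanish (by omega : min a b + 1 ≤ a + 1)]
  simp_rw [choose_mul_choose_eq_sum_add_choose]
  rw [sum_comm]
  refine sum_congr rfl fun j hj => ?_
  rw [← sum_mul, ← sum_mul, sum_range_add_choose_of_le (by have := mem_range.mp hj; omega)]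

end Nat

/-- The sum over `i` from `0` to `c` of `C(t+i,u)·C(v+i,w)` equals the triple sum over
integers `a, b, j` of `C(t,u−a)·C(v,w−b)·C(c+j+1,a+b+1)·C(a,j)·C(b,j)`.  By the vanishing
conventions, the only nonzero terms have `0 ≤ a ≤ u`, `0 ≤ b ≤ w`, `0 ≤ j ≤ min a b`. -/
theorem stmt2 (c t u v w : ℕ) :
    ∑ i ∈ Finset.range (c + 1), (t + i).choose u * (v + i).choose w
    = ∑ a ∈ Finset.range (u + 1), ∑ b ∈ Finset.range (w + 1),
        ∑ j ∈ Finset.range (min a b + 1),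
          t.choose (u - a) * v.choose (w - b) *
            (c + j + 1).choose (a + b + 1) * a.choose j * b.choose j := by
  calc _ = ∑ a ∈ range (u + 1), ∑ b ∈ range (w + 1),
        t.choose (u - a) * v.choose (w - b) * ∑ i ∈ range (c + 1), i.choose a * i.choose b := by
        simp_rw [Nat.add_choose_eq_sum_range t, Nat.add_choose_eq_sum_range v, sum_mul_sum, mul_sum]
        rw [sum_comm]
        refine sum_congr rfl fun a _ => ?_
        rw [sum_comm]
        exact sum_congr rfl fun b _ => sum_congr rfl fun i _ => by ring
    _ = _ := by simp_rw [Nat.sum_range_choose_mul_choose, mul_sum, mul_assoc]
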